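/- arXiv:1801.04996 — 6 statements merged into one kernel-verified Lean document; each statement's English description precedes it below -/
import Mathlib

section
/- Let d ≥ 1, N ≥ 1, let L_d : ℝ^d × ℝ^d → ℝ be continuously differentiable, and let q : {0, 1, …, N} → ℝ^d be a discrete path. Then the following are equivalent: (a) for every v : {0, 1, …, N} → ℝ^d with v₀ = 0 and v_N = 0, the derivative at ε = 0 of ε ↦ Σ_{k=0}^{N−1} L_d(q_k + ε·v_k, q_{k+1} + ε·v_{k+1}) equals 0 (the discrete Hamilton principle); (b) for every k with 1 ≤ k ≤ N−1, the discrete Euler–Lagrange equations hold: D₂L_d(q_{k−1}, q_k) + D₁L_d(q_k, q_{k+1}) = 0. -/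
/-!
Differentiating the action along the variation `ε ↦ q + ε • v` gives
`Σ_{k<N} (⟪D₁L_d(q_k, q_{k+1}), v_k⟫ + ⟪D₂L_d(q_k, q_{k+1}), v_{k+1}⟫)`. Shifting the index in the
second sum (summation by parts, using `v₀ = v_N = 0`) turns this into `Σ_{k<N} ⟪E_k, v_k⟫`, where
`E_k` is the left-hand side of the `k`-th discrete Euler–Lagrange equation. This sum vanishes for
all such `v` iff every `E_k` with `0 < k < N` vanishes: for one direction take `v` supported at `k`
with value `E_k`.
-/

open scoped RealInnerProductSpace

open Finset

theorem sum_range_shift_eq_of_eq_zero {M : Type*} [AddCommMonoid M] {h : ℕ → M} {N : ℕ}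
    (h0 : h 0 = 0) (hN : h N = 0) :
    ∑ k ∈ range N, h (k + 1) = ∑ k ∈ range N, h k := by
  rw [← add_zero (∑ k ∈ range N, h (k + 1)), ← h0, ← sum_range_succ', sum_range_succ, hN, add_zero]

section Partials

variable {𝕜 E F G : Type*} [NontriviallyNormedField 𝕜] [NormedAddCommGroup E] [NormedSpace 𝕜 E]
  [NormedAddCommGroup F] [NormedSpace 𝕜 F] [NormedAddCommGroup G] [NormedSpace 𝕜 G]

theorem fderiv_apply_prod_eq_add {f : E × F → G} {a : E} {b : F}
    (hf : DifferentiableAt 𝕜 f (a, b)) (u : E) (w : F) :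
    fderiv 𝕜 f (a, b) (u, w) =
      fderiv 𝕜 (fun x => f (x, b)) a u + fderiv 𝕜 (fun y => f (a, y)) b w := by
  have hleft : HasFDerivAt (fun x => f (x, b)) ((fderiv 𝕜 f (a, b)).comp (.inl 𝕜 E F)) a :=
    hf.hasFDerivAt.comp a (hasFDerivAt_prodMk_left a b)
  have hright : HasFDerivAt (fun y => f (a, y)) ((fderiv 𝕜 f (a, b)).comp (.inr 𝕜 E F)) b :=
    hf.hasFDerivAt.comp b (hasFDerivAt_prodMk_right a b)
  rw [hleft.fderiv, hright.fderiv]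
  exact (ContinuousLinearMap.comp_inl_add_comp_inr _ (u, w)).symm

end Partials

variable {F : Type*} [NormedAddCommGroup F] [InnerProductSpace ℝ F]

theorem forall_sum_range_inner_eq_zero_iff {E : ℕ → F} {N : ℕ} :
    (∀ v : ℕ → F, v 0 = 0 → v N = 0 → ∑ k ∈ range N, ⟪E k, v k⟫ = 0) ↔
      ∀ k, 1 ≤ k → k + 1 ≤ N → E k = 0 := by
  constructor
  · intro h k hk hkN
    have hsum := h (Pi.single k (E k)) (Pi.single_eq_of_ne (by omega) _)
      (Pi.single_eq_of_ne (by omega) _)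
    rw [sum_eq_single_of_mem k (mem_range.mpr (by omega))
      fun i _ hik => by rw [Pi.single_eq_of_ne hik, inner_zero_right], Pi.single_eq_same] at hsum
    exact inner_self_eq_zero.mp hsum
  · intro h v hv0 _
    refine sum_eq_zero fun k hk => ?_
    rcases Nat.eq_zero_or_pos k with rfl | hpos
    · rw [hv0, inner_zero_right]
    · rw [h k hpos (mem_range.mp hk), inner_zero_left]

variable [CompleteSpace F]

theorem fderiv_apply_prod_eq_inner_gradient_add {f : F × F → ℝ} {a b : F}
    (hf : DifferentiableAt ℝ f (a, b)) (u w : F) :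
    fderiv ℝ f (a, b) (u, w) =
      ⟪gradient (fun x => f (x, b)) a, u⟫ + ⟪gradient (fun y => f (a, y)) b, w⟫ := by
  rw [inner_gradient_left, inner_gradient_left, fderiv_apply_prod_eq_add hf]

-- At `k = 0` the index `k - 1` truncates to `0`; this junk value is always paired with `v 0 = 0`.
noncomputable def discreteEulerLagrange (Ld : F × F → ℝ) (q : ℕ → F) (k : ℕ) : F :=
  gradient (fun y => Ld (q (k - 1), y)) (q k) + gradient (fun x => Ld (x, q (k + 1))) (q k)

theorem hasDerivAt_discreteAction_variation {Ld : F × F → ℝ} (hLd : Differentiable ℝ Ld)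
    {q v : ℕ → F} {N : ℕ} (hv0 : v 0 = 0) (hvN : v N = 0) :
    HasDerivAt (fun ε : ℝ => ∑ k ∈ range N, Ld (q k + ε • v k, q (k + 1) + ε • v (k + 1)))
      (∑ k ∈ range N, ⟪discreteEulerLagrange Ld q k, v k⟫) 0 := by
  have hterm : ∀ k, HasDerivAt (fun ε : ℝ => Ld (q k + ε • v k, q (k + 1) + ε • v (k + 1)))
      (⟪gradient (fun x => Ld (x, q (k + 1))) (q k), v k⟫ +
        ⟪gradient (fun y => Ld (q k, y)) (q (k + 1)), v (k + 1)⟫) 0 := fun k => by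
    rw [← fderiv_apply_prod_eq_inner_gradient_add (hLd _)]
    exact (hLd (q k, q (k + 1))).hasFDerivAt.hasLineDerivAt (v k, v (k + 1))
  refine (HasDerivAt.fun_sum fun k _ => hterm k).congr_deriv ?_
  have hshift := sum_range_shift_eq_of_eq_zero (N := N)
    (h := fun k => ⟪gradient (fun y => Ld (q (k - 1), y)) (q k), v k⟫)
    (by simp [hv0]) (by simp [hvN])
  simp only [Nat.add_sub_cancel] at hshift
  rw [sum_add_distrib, hshift, ← sum_add_distrib]
  exact sum_congr rfl fun k _ => by rw [discreteEulerLagrange, inner_add_left, add_comm]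

theorem discrete_hamilton_principle_iff_discrete_euler_lagrange_general
    (d : ℕ) (N : ℕ)
    (Ld : EuclideanSpace ℝ (Fin d) × EuclideanSpace ℝ (Fin d) → ℝ)
    (hLd : ContDiff ℝ 1 Ld)
    (q : ℕ → EuclideanSpace ℝ (Fin d)) :
    (∀ v : ℕ → EuclideanSpace ℝ (Fin d), v 0 = 0 → v N = 0 →
      deriv (fun ε : ℝ =>
        ∑ k ∈ Finset.range N, Ld (q k + ε • v k, q (k + 1) + ε • v (k + 1))) 0 = 0)
    ↔
    (∀ k : ℕ, 1 ≤ k → k + 1 ≤ N →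
      gradient (fun y => Ld (q (k - 1), y)) (q k)
        + gradient (fun x => Ld (x, q (k + 1))) (q k) = 0) := by
  refine Iff.trans ?_ (forall_sum_range_inner_eq_zero_iff (E := discreteEulerLagrange Ld q))
  refine forall_congr' fun v => imp_congr_right fun hv0 => imp_congr_right fun hvN => ?_
  rw [(hasDerivAt_discreteAction_variation (hLd.differentiable one_ne_zero) hv0 hvN).deriv]

/-- **Discrete Hamilton's principle is equivalent to the discrete Euler–Lagrange equations.**
A discrete path `q : {0, …, N} → ℝ^d` is a stationary point of the discrete action
`𝓑_d(q) = Σ_{k=0}^{N−1} L_d(q_k, q_{k+1})` with respect to variations vanishing at the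
endpoints if and only if the discrete Euler–Lagrange equations
`D₂L_d(q_{k−1}, q_k) + D₁L_d(q_k, q_{k+1}) = 0` hold for `1 ≤ k ≤ N−1`. -/
theorem discrete_hamilton_principle_iff_discrete_euler_lagrange
    (d : ℕ) (hd : 1 ≤ d) (N : ℕ) (hN : 1 ≤ N)
    (Ld : EuclideanSpace ℝ (Fin d) × EuclideanSpace ℝ (Fin d) → ℝ)
    (hLd : ContDiff ℝ 1 Ld)
    (q : ℕ → EuclideanSpace ℝ (Fin d)) :
    (∀ v : ℕ → EuclideanSpace ℝ (Fin d), v 0 = 0 → v N = 0 →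
      deriv (fun ε : ℝ =>
        ∑ k ∈ Finset.range N, Ld (q k + ε • v k, q (k + 1) + ε • v (k + 1))) 0 = 0)
    ↔
    (∀ k : ℕ, 1 ≤ k → k + 1 ≤ N →
      gradient (fun y => Ld (q (k - 1), y)) (q k)
        + gradient (fun x => Ld (x, q (k + 1))) (q k) = 0) :=
  discrete_hamilton_principle_iff_discrete_euler_lagrange_general d N Ld hLd q
end

section
/- Let d ≥ 1, N ≥ 1, let L_d : ℝ^d × ℝ^d → ℝ be continuously differentiable, let f_d⁺, f_d⁻ : ℝ^d × ℝ^d → ℝ^d be the discrete forces, and let q : {0, 1, …, N} → ℝ^d be a discrete path. Then the following are equivalent: (a) for every v : {0, 1, …, N} → ℝ^d with v₀ = 0 and v_N = 0, the derivative at ε = 0 of ε ↦ Σ_{k=0}^{N−1} L_d(q_k + ε·v_k, q_{k+1} + ε·v_{k+1}), plus Σ_{k=0}^{N−1} [⟨f_d⁺(q_k, q_{k+1}), v_{k+1}⟩ + ⟨f_d⁻(q_k, q_{k+1}), v_k⟩], equals 0 (the discrete Lagrange–d'Alembert principle); (b) for every k with 1 ≤ k ≤ N−1, the forced discrete Euler–Lagrange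 equations hold: D₂L_d(q_{k−1}, q_k) + D₁L_d(q_k, q_{k+1}) + f_d⁺(q_{k−1}, q_k) + f_d⁻(q_k, q_{k+1}) = 0. -/
open scoped RealInnerProductSpace

section Aux

variable {F : Type*} [NormedAddCommGroup F] [InnerProductSpace ℝ F] [CompleteSpace F]

lemma inner_gradient_eq {f : F → ℝ} (x y : F) :
    ⟪gradient f x, y⟫ = fderiv ℝ f x y := by
  simpa [gradient] using
    (InnerProductSpace.toDual_symm_apply (𝕜 := ℝ) (E := F) (x := y) (y := fderiv ℝ f x))

lemma fderiv_prod_eq_inner_gradients {f : F × F → ℝ} (hf : ContDiff ℝ 1 f)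
    (a b x y : F) :
    fderiv ℝ f (a, b) (x, y)
      = ⟪gradient (fun x => f (x, b)) a, x⟫ + ⟪gradient (fun y => f (a, y)) b, y⟫ := by
  have hdf : HasFDerivAt f (fderiv ℝ f (a, b)) (a, b) :=
    ((hf.differentiable one_ne_zero) (a, b)).hasFDerivAt
  have h1 : HasFDerivAt (fun x => f (x, b))
      ((fderiv ℝ f (a, b)).comp (ContinuousLinearMap.inl ℝ F F)) a :=
    hdf.comp a ((hasFDerivAt_id a).prodMk (hasFDerivAt_const b a))
  have h2 : HasFDerivAt (fun y => f (a, y))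
      ((fderiv ℝ f (a, b)).comp (ContinuousLinearMap.inr ℝ F F)) b :=
    hdf.comp b ((hasFDerivAt_const a b).prodMk (hasFDerivAt_id b))
  have e1 : fderiv ℝ (fun x => f (x, b)) a
      = (fderiv ℝ f (a, b)).comp (ContinuousLinearMap.inl ℝ F F) := h1.fderiv
  have e2 : fderiv ℝ (fun y => f (a, y)) b
      = (fderiv ℝ f (a, b)).comp (ContinuousLinearMap.inr ℝ F F) := h2.fderiv
  have hxy : (x, y) = ((x, 0) : F × F) + (0, y) := by simp
  rw [inner_gradient_eq, inner_gradient_eq, e1, e2, hxy, map_add]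
  simp

lemma hasDerivAt_eps {f : F × F → ℝ} (hf : ContDiff ℝ 1 f) (a b x y : F) :
    HasDerivAt (fun ε : ℝ => f (a + ε • x, b + ε • y))
      (⟪gradient (fun x => f (x, b)) a, x⟫ + ⟪gradient (fun y => f (a, y)) b, y⟫) 0 := by
  have hc1 : HasDerivAt (fun ε : ℝ => a + ε • x) x 0 := by
    simpa using (((hasDerivAt_id (0 : ℝ)).smul_const x).const_add a)
  have hc2 : HasDerivAt (fun ε : ℝ => b + ε • y) y 0 := by
    simpa using (((hasDerivAt_id (0 : ℝ)).smul_const y).const_add b)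
  have hcurve : HasDerivAt (fun ε : ℝ => ((a + ε • x, b + ε • y) : F × F)) (x, y) 0 :=
    hc1.prodMk hc2
  have hdf : HasFDerivAt f (fderiv ℝ f (a, b)) ((fun ε : ℝ => ((a + ε • x, b + ε • y) : F × F)) 0) := by
    simpa using ((hf.differentiable one_ne_zero) (a, b)).hasFDerivAt
  have := hdf.comp_hasDerivAt 0 hcurve
  rwa [fderiv_prod_eq_inner_gradients hf] at this

end Aux

/-- **Discrete Lagrange–d'Alembert principle is equivalent to the forced discrete
Euler–Lagrange equations.**  A discrete path `q : {0, …, N} → ℝ^d` satisfies the discrete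
Lagrange–d'Alembert principle — the variation of the discrete action plus the discrete
virtual work `Σ [⟨f_d⁺(q_k, q_{k+1}), v_{k+1}⟩ + ⟨f_d⁻(q_k, q_{k+1}), v_k⟩]` vanishes for all
variations vanishing at the endpoints — if and only if the forced discrete Euler–Lagrange
equations `D₂L_d(q_{k−1}, q_k) + D₁L_d(q_k, q_{k+1}) + f_d⁺(q_{k−1}, q_k)
+ f_d⁻(q_k, q_{k+1}) = 0` hold for `1 ≤ k ≤ N−1`. -/
theorem discrete_lagrange_dalembert_iff_forced_discrete_euler_lagrange
    (d : ℕ) (hd : 1 ≤ d) (N : ℕ) (hN : 1 ≤ N)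
    (Ld : EuclideanSpace ℝ (Fin d) × EuclideanSpace ℝ (Fin d) → ℝ)
    (hLd : ContDiff ℝ 1 Ld)
    (fdp fdm : EuclideanSpace ℝ (Fin d) × EuclideanSpace ℝ (Fin d) →
      EuclideanSpace ℝ (Fin d))
    (q : ℕ → EuclideanSpace ℝ (Fin d)) :
    (∀ v : ℕ → EuclideanSpace ℝ (Fin d), v 0 = 0 → v N = 0 →
      deriv (fun ε : ℝ =>
          ∑ k ∈ Finset.range N, Ld (q k + ε • v k, q (k + 1) + ε • v (k + 1))) 0
        + ∑ k ∈ Finset.range N,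
            (⟪fdp (q k, q (k + 1)), v (k + 1)⟫ + ⟪fdm (q k, q (k + 1)), v k⟫) = 0)
    ↔
    (∀ k : ℕ, 1 ≤ k → k + 1 ≤ N →
      gradient (fun y => Ld (q (k - 1), y)) (q k)
        + gradient (fun x => Ld (x, q (k + 1))) (q k)
        + fdp (q (k - 1), q k) + fdm (q k, q (k + 1)) = 0) := by
  classical
  let F := EuclideanSpace ℝ (Fin d)
  set g1 : ℕ → F := fun k => gradient (fun x => Ld (x, q (k + 1))) (q k) with hg1
  set g2 : ℕ → F := fun k => gradient (fun y => Ld (q k, y)) (q (k + 1)) with hg2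
  set El : ℕ → F := fun k =>
    gradient (fun y => Ld (q (k - 1), y)) (q k)
      + gradient (fun x => Ld (x, q (k + 1))) (q k)
      + fdp (q (k - 1), q k) + fdm (q k, q (k + 1)) with hEl
  -- the main computation of the variation
  have key : ∀ v : ℕ → F, v 0 = 0 → v N = 0 →
      deriv (fun ε : ℝ =>
          ∑ k ∈ Finset.range N, Ld (q k + ε • v k, q (k + 1) + ε • v (k + 1))) 0
        + ∑ k ∈ Finset.range N,
            (⟪fdp (q k, q (k + 1)), v (k + 1)⟫ + ⟪fdm (q k, q (k + 1)), v k⟫)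
      = ∑ k ∈ Finset.Ico 1 N, ⟪El k, v k⟫ := by
    intro v hv0 hvN
    have hder : deriv (fun ε : ℝ =>
        ∑ k ∈ Finset.range N, Ld (q k + ε • v k, q (k + 1) + ε • v (k + 1))) 0
        = ∑ k ∈ Finset.range N, (⟪g1 k, v k⟫ + ⟪g2 k, v (k + 1)⟫) := by
      have : HasDerivAt (fun ε : ℝ =>
          ∑ k ∈ Finset.range N, Ld (q k + ε • v k, q (k + 1) + ε • v (k + 1)))
          (∑ k ∈ Finset.range N, (⟪g1 k, v k⟫ + ⟪g2 k, v (k + 1)⟫)) 0 := by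
        apply HasDerivAt.fun_sum
        intro k _
        exact hasDerivAt_eps hLd (q k) (q (k + 1)) (v k) (v (k + 1))
      exact this.deriv
    rw [hder]
    have split : ∑ k ∈ Finset.range N, (⟪g1 k, v k⟫ + ⟪g2 k, v (k + 1)⟫)
        + ∑ k ∈ Finset.range N,
            (⟪fdp (q k, q (k + 1)), v (k + 1)⟫ + ⟪fdm (q k, q (k + 1)), v k⟫)
        = (∑ k ∈ Finset.range N, ⟪g1 k + fdm (q k, q (k + 1)), v k⟫)
          + ∑ k ∈ Finset.range N, ⟪g2 k + fdp (q k, q (k + 1)), v (k + 1)⟫ := by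
      rw [← Finset.sum_add_distrib, ← Finset.sum_add_distrib]
      congr 1
      funext k
      simp only [inner_add_left]
      ring
    rw [split]
    set A : ℕ → F := fun k => g1 k + fdm (q k, q (k + 1)) with hA
    set B : ℕ → F := fun k => g2 k + fdp (q k, q (k + 1)) with hB
    have sumA : ∑ k ∈ Finset.range N, ⟪A k, v k⟫ = ∑ k ∈ Finset.Ico 1 N, ⟪A k, v k⟫ := by
      rw [Finset.range_eq_Ico,
        Finset.sum_eq_sum_Ico_succ_bot (by omega : 0 < N) (fun k => ⟪A k, v k⟫)]
      simp [hv0]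
    have sumB : ∑ k ∈ Finset.range N, ⟪B k, v (k + 1)⟫
        = ∑ k ∈ Finset.Ico 1 N, ⟪B (k - 1), v k⟫ := by
      have h1 : ∑ k ∈ Finset.Ico 1 (N + 1), ⟪B (k - 1), v k⟫
          = ∑ k ∈ Finset.range N, ⟪B k, v (k + 1)⟫ := by
        rw [Finset.sum_Ico_eq_sum_range]
        simp [Nat.add_comm 1]
      have h2 : ∑ k ∈ Finset.Ico 1 (N + 1), ⟪B (k - 1), v k⟫
          = (∑ k ∈ Finset.Ico 1 N, ⟪B (k - 1), v k⟫) + ⟪B (N - 1), v N⟫ :=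
        Finset.sum_Ico_succ_top hN _
      rw [← h1, h2, hvN]
      simp
    rw [sumA, sumB, ← Finset.sum_add_distrib]
    apply Finset.sum_congr rfl
    intro k hk
    have hk1 : 1 ≤ k := (Finset.mem_Ico.mp hk).1
    have hkk : k - 1 + 1 = k := Nat.succ_pred_eq_of_pos hk1
    rw [← inner_add_left]
    congr 1
    simp only [hA, hB, hEl, hg1, hg2, hkk]
    abel
  constructor
  · intro h k hk1 hkN
    have hkmem : k ∈ Finset.Ico 1 N := Finset.mem_Ico.mpr ⟨hk1, by omega⟩
    set v : ℕ → F := fun j => if j = k then El k else 0 with hv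
    have hv0 : v 0 = 0 := by simp only [hv]; exact if_neg (by omega)
    have hvN : v N = 0 := by simp only [hv]; exact if_neg (by omega)
    have := h v hv0 hvN
    rw [key v hv0 hvN] at this
    have hsum : ∑ j ∈ Finset.Ico 1 N, ⟪El j, v j⟫ = ⟪El k, El k⟫ := by
      rw [Finset.sum_eq_single k]
      · simp [hv]
      · intro j _ hj; simp [hv, hj]
      · intro hc; exact absurd hkmem hc
    rw [hsum] at this
    have : El k = 0 := by
      rwa [inner_self_eq_zero (𝕜 := ℝ)] at this
    simpa [hEl] using this
  · intro h v hv0 hvN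
    rw [key v hv0 hvN]
    apply Finset.sum_eq_zero
    intro k hk
    have hk' := Finset.mem_Ico.mp hk
    have : El k = 0 := h k hk'.1 (by omega)
    simp [this]
end

section
/- Let d ≥ 1, N ≥ 1, let L_d : (ℝ × ℝ^d) × (ℝ × ℝ^d) → ℝ, written L_d(t, q, t', q'), be continuously differentiable, and let (t, q) : {0, 1, …, N} → ℝ × ℝ^d be an extended discrete path. Then the following are equivalent: (a) for every pair τ : {0, …, N} → ℝ and v : {0, …, N} → ℝ^d with τ₀ = 0, τ_N = 0, v₀ = 0, v_N = 0, the derivative at ε = 0 of ε ↦ Σ_{k=0}^{N−1} L_d(t_k + ε·τ_k, q_k + ε·v_k, t_{k+1} + ε·τ_{k+1}, q_{k+1} + ε·v_{k+1}) equals 0; (b) for every k with 1 ≤ k ≤ N−1, both extended discrete Euler–Lagrange equations hold: D₄L_d(t_{k−1}, q_{k−1}, t_k, q_k) + D₂L_d(t_k, q_k, t_{k+1}, q_{k+1}) = 0 and D₃L_d(t_{k−1}, q_{k−1}, t_k, q_k) + D₁L_d(t_k, q_k, t_{k+1}, q_{k+1}) = 0. -/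
open scoped RealInnerProductSpace

noncomputable section

section ExtDiscAux

set_option linter.unusedSectionVars false

variable {F : Type*} [NormedAddCommGroup F] [InnerProductSpace ℝ F] [CompleteSpace F]

/-- Partial derivative of `Ld` in the first (time) slot as a derivative. -/
lemma extDisc_hasDerivAt_slot1 (Ld : (ℝ × F) × (ℝ × F) → ℝ) (hLd : Differentiable ℝ Ld)
    (a b : ℝ) (x y : F) :
    HasDerivAt (fun s => Ld ((s, x), (b, y)))
      (fderiv ℝ Ld ((a, x), (b, y)) ((1, 0), (0, 0))) a := by
  have h : HasDerivAt (fun s : ℝ => ((s, x), (b, y))) (((1:ℝ), (0:F)), ((0:ℝ), (0:F))) a :=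
    HasDerivAt.prodMk (HasDerivAt.prodMk (hasDerivAt_id a) (hasDerivAt_const _ _)) (hasDerivAt_const _ _)
  exact (hLd _).hasFDerivAt.comp_hasDerivAt a h

lemma extDisc_hasDerivAt_slot3 (Ld : (ℝ × F) × (ℝ × F) → ℝ) (hLd : Differentiable ℝ Ld)
    (a b : ℝ) (x y : F) :
    HasDerivAt (fun s => Ld ((a, x), (s, y)))
      (fderiv ℝ Ld ((a, x), (b, y)) ((0, 0), (1, 0))) b := by
  have h : HasDerivAt (fun s : ℝ => ((a, x), (s, y))) (((0:ℝ), (0:F)), ((1:ℝ), (0:F))) b :=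
    HasDerivAt.prodMk (hasDerivAt_const _ _) (HasDerivAt.prodMk (hasDerivAt_id b) (hasDerivAt_const _ _))
  exact (hLd _).hasFDerivAt.comp_hasDerivAt b h

lemma extDisc_inner_gradient {f : F → ℝ} {f' : F →L[ℝ] ℝ} {x : F}
    (hf : HasFDerivAt f f' x) (w : F) : ⟪gradient f x, w⟫ = f' w := by
  have hg : HasGradientAt f ((InnerProductSpace.toDual ℝ F).symm f') x :=
    hasFDerivAt_iff_hasGradientAt.mp hf
  rw [hg.gradient, InnerProductSpace.toDual_symm_apply]

lemma extDisc_hasFDerivAt_slot2 (Ld : (ℝ × F) × (ℝ × F) → ℝ) (hLd : Differentiable ℝ Ld)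
    (a b : ℝ) (x y : F) :
    HasFDerivAt (fun x' : F => Ld ((a, x'), (b, y)))
      ((fderiv ℝ Ld ((a, x), (b, y))).comp
        (((0 : F →L[ℝ] ℝ).prod (ContinuousLinearMap.id ℝ F)).prod (0 : F →L[ℝ] ℝ × F))) x := by
  have h : HasFDerivAt (fun x' : F => ((a, x'), (b, y)))
      ((((0 : F →L[ℝ] ℝ).prod (ContinuousLinearMap.id ℝ F)).prod (0 : F →L[ℝ] ℝ × F))) x :=
    (HasFDerivAt.prodMk (HasFDerivAt.prodMk (hasFDerivAt_const a x) (hasFDerivAt_id x)) (hasFDerivAt_const (b, y) x))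
  exact (hLd _).hasFDerivAt.comp x h

lemma extDisc_hasFDerivAt_slot4 (Ld : (ℝ × F) × (ℝ × F) → ℝ) (hLd : Differentiable ℝ Ld)
    (a b : ℝ) (x y : F) :
    HasFDerivAt (fun y' : F => Ld ((a, x), (b, y')))
      ((fderiv ℝ Ld ((a, x), (b, y))).comp
        ((0 : F →L[ℝ] ℝ × F).prod ((0 : F →L[ℝ] ℝ).prod (ContinuousLinearMap.id ℝ F)))) y := by
  have h : HasFDerivAt (fun y' : F => ((a, x), (b, y')))
      ((0 : F →L[ℝ] ℝ × F).prod ((0 : F →L[ℝ] ℝ).prod (ContinuousLinearMap.id ℝ F))) y :=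
    (HasFDerivAt.prodMk (hasFDerivAt_const (a, x) y) (HasFDerivAt.prodMk (hasFDerivAt_const b y) (hasFDerivAt_id y)))
  exact (hLd _).hasFDerivAt.comp y h

lemma extDisc_inner_gradient_slot2 (Ld : (ℝ × F) × (ℝ × F) → ℝ) (hLd : Differentiable ℝ Ld)
    (a b : ℝ) (x y w : F) :
    ⟪gradient (fun x' : F => Ld ((a, x'), (b, y))) x, w⟫
      = fderiv ℝ Ld ((a, x), (b, y)) ((0, w), (0, 0)) := by
  rw [extDisc_inner_gradient (extDisc_hasFDerivAt_slot2 Ld hLd a b x y) w]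
  simp
  rfl

lemma extDisc_inner_gradient_slot4 (Ld : (ℝ × F) × (ℝ × F) → ℝ) (hLd : Differentiable ℝ Ld)
    (a b : ℝ) (x y w : F) :
    ⟪gradient (fun y' : F => Ld ((a, x), (b, y'))) y, w⟫
      = fderiv ℝ Ld ((a, x), (b, y)) ((0, 0), (0, w)) := by
  rw [extDisc_inner_gradient (extDisc_hasFDerivAt_slot4 Ld hLd a b x y) w]
  simp
  rfl

lemma extDisc_deriv_action (Ld : (ℝ × F) × (ℝ × F) → ℝ) (hLd : Differentiable ℝ Ld)
    (N : ℕ) (t τ : ℕ → ℝ) (q v : ℕ → F) :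
    deriv (fun ε : ℝ =>
        ∑ k ∈ Finset.range N,
          Ld ((t k + ε * τ k, q k + ε • v k),
              (t (k + 1) + ε * τ (k + 1), q (k + 1) + ε • v (k + 1)))) 0
      = ∑ k ∈ Finset.range N,
          fderiv ℝ Ld ((t k, q k), (t (k + 1), q (k + 1))) ((τ k, v k), (τ (k + 1), v (k + 1))) := by
  have key : ∀ k : ℕ, HasDerivAt (fun ε : ℝ =>
      Ld ((t k + ε * τ k, q k + ε • v k),
          (t (k + 1) + ε * τ (k + 1), q (k + 1) + ε • v (k + 1))))
      (fderiv ℝ Ld ((t k, q k), (t (k + 1), q (k + 1))) ((τ k, v k), (τ (k + 1), v (k + 1)))) 0 := by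
    intro k
    have h1 : ∀ j : ℕ, HasDerivAt (fun ε : ℝ => t j + ε * τ j) (τ j) 0 := by
      intro j
      simpa using (((hasDerivAt_id (0 : ℝ)).mul_const (τ j)).const_add (t j))
    have h2 : ∀ j : ℕ, HasDerivAt (fun ε : ℝ => q j + ε • v j) (v j) 0 := by
      intro j
      simpa using (((hasDerivAt_id (0 : ℝ)).smul_const (v j)).const_add (q j))
    have hp : HasDerivAt (fun ε : ℝ =>
        ((t k + ε * τ k, q k + ε • v k),
         (t (k + 1) + ε * τ (k + 1), q (k + 1) + ε • v (k + 1))))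
        ((τ k, v k), (τ (k + 1), v (k + 1))) 0 :=
      HasDerivAt.prodMk (HasDerivAt.prodMk (h1 k) (h2 k)) (HasDerivAt.prodMk (h1 (k + 1)) (h2 (k + 1)))
    have hF : HasFDerivAt Ld (fderiv ℝ Ld ((t k, q k), (t (k + 1), q (k + 1))))
        ((t k + (0:ℝ) * τ k, q k + (0:ℝ) • v k),
         (t (k + 1) + (0:ℝ) * τ (k + 1), q (k + 1) + (0:ℝ) • v (k + 1))) := by
      simp only [zero_mul, zero_smul, add_zero]
      exact (hLd _).hasFDerivAt
    exact hF.comp_hasDerivAt 0 hp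
  exact (HasDerivAt.fun_sum (fun k _ => key k)).deriv

lemma extDisc_sum_rearrange {V : Type*} [NormedAddCommGroup V] [NormedSpace ℝ V]
    (L : ℕ → (V × V →L[ℝ] ℝ)) (N : ℕ) (u : ℕ → V) (h0 : u 0 = 0) (hN : u N = 0) :
    ∑ k ∈ Finset.range N, L k (u k, u (k + 1))
      = ∑ k ∈ Finset.range N, (L k (u k, 0) + L (k - 1) (0, u k)) := by
  have split : ∀ k, L k (u k, u (k + 1)) = L k (u k, 0) + L k (0, u (k + 1)) := by
    intro k
    rw [← map_add]
    congr 1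
    simp
  calc ∑ k ∈ Finset.range N, L k (u k, u (k + 1))
      = ∑ k ∈ Finset.range N, L k (u k, 0) + ∑ k ∈ Finset.range N, L k (0, u (k + 1)) := by
        simp_rw [split]; rw [Finset.sum_add_distrib]
    _ = ∑ k ∈ Finset.range N, L k (u k, 0) + ∑ k ∈ Finset.range N, L (k - 1) (0, u k) := by
        congr 1
        have hg0 : L (0 - 1) ((0 : V), u 0) = 0 := by
          rw [h0]; exact (L (0 - 1)).map_zero
        have hgN : L (N - 1) ((0 : V), u N) = 0 := by
          rw [hN]; exact (L (N - 1)).map_zero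
        have e1 : ∑ k ∈ Finset.range N, L k (0, u (k + 1))
            = ∑ k ∈ Finset.range N, (fun j => L (j - 1) ((0 : V), u j)) (k + 1) := by
          apply Finset.sum_congr rfl
          intro k _
          simp
        rw [e1]
        have e2 := Finset.sum_range_succ' (fun j => L (j - 1) ((0 : V), u j)) N
        have e3 := Finset.sum_range_succ (fun j => L (j - 1) ((0 : V), u j)) N
        rw [e3] at e2
        simp only [hg0, hgN, add_zero] at e2
        exact e2.symm
    _ = ∑ k ∈ Finset.range N, (L k (u k, 0) + L (k - 1) (0, u k)) := by
        rw [Finset.sum_add_distrib]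

end ExtDiscAux

/-- **Extended discrete Hamilton's principle is equivalent to the extended discrete
Euler–Lagrange equations.**  An extended discrete path `(t, q) : {0, …, N} → ℝ × ℝ^d` is a
stationary point of the extended discrete action
`𝓑̄_d = Σ_{k=0}^{N−1} L_d(t_k, q_k, t_{k+1}, q_{k+1})` with respect to variations `(τ, v)`
vanishing at the endpoints if and only if both extended discrete Euler–Lagrange equations
`D₄L_d(t_{k−1}, q_{k−1}, t_k, q_k) + D₂L_d(t_k, q_k, t_{k+1}, q_{k+1}) = 0` and
`D₃L_d(t_{k−1}, q_{k−1}, t_k, q_k) + D₁L_d(t_k, q_k, t_{k+1}, q_{k+1}) = 0` hold for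
`1 ≤ k ≤ N−1`. -/
theorem extended_discrete_hamilton_principle_iff_extended_discrete_euler_lagrange
    (d : ℕ) (hd : 1 ≤ d) (N : ℕ) (hN : 1 ≤ N)
    (Ld : (ℝ × EuclideanSpace ℝ (Fin d)) × (ℝ × EuclideanSpace ℝ (Fin d)) → ℝ)
    (hLd : ContDiff ℝ 1 Ld)
    (t : ℕ → ℝ) (q : ℕ → EuclideanSpace ℝ (Fin d)) :
    (∀ (τ : ℕ → ℝ) (v : ℕ → EuclideanSpace ℝ (Fin d)),
      τ 0 = 0 → τ N = 0 → v 0 = 0 → v N = 0 →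
      deriv (fun ε : ℝ =>
        ∑ k ∈ Finset.range N,
          Ld ((t k + ε * τ k, q k + ε • v k),
              (t (k + 1) + ε * τ (k + 1), q (k + 1) + ε • v (k + 1)))) 0 = 0)
    ↔
    (∀ k : ℕ, 1 ≤ k → k + 1 ≤ N →
      gradient (fun y => Ld ((t (k - 1), q (k - 1)), (t k, y))) (q k)
        + gradient (fun x => Ld ((t k, x), (t (k + 1), q (k + 1)))) (q k) = 0
      ∧
      deriv (fun s => Ld ((t (k - 1), q (k - 1)), (s, q k))) (t k)
        + deriv (fun s => Ld ((s, q k), (t (k + 1), q (k + 1)))) (t k) = 0) := by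
  classical
  have hdiff : Differentiable ℝ Ld := hLd.differentiable one_ne_zero
  -- key reformulation of the Euler–Lagrange equations at index `k`
  have hEL : ∀ k : ℕ, 1 ≤ k → k + 1 ≤ N →
      ((gradient (fun y => Ld ((t (k - 1), q (k - 1)), (t k, y))) (q k)
          + gradient (fun x => Ld ((t k, x), (t (k + 1), q (k + 1)))) (q k) = 0
        ∧ deriv (fun s => Ld ((t (k - 1), q (k - 1)), (s, q k))) (t k)
          + deriv (fun s => Ld ((s, q k), (t (k + 1), q (k + 1)))) (t k) = 0)
      ↔ ∀ p : ℝ × EuclideanSpace ℝ (Fin d),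
          fderiv ℝ Ld ((t (k - 1), q (k - 1)), (t k, q k)) (0, p)
            + fderiv ℝ Ld ((t k, q k), (t (k + 1), q (k + 1))) (p, 0) = 0) := by
    intro k hk1 hk2
    have hG4 := fun w => extDisc_inner_gradient_slot4 Ld hdiff (t (k - 1)) (t k) (q (k - 1)) (q k) w
    have hG2 := fun w =>
      extDisc_inner_gradient_slot2 Ld hdiff (t k) (t (k + 1)) (q k) (q (k + 1)) w
    have hD3 : deriv (fun s => Ld ((t (k - 1), q (k - 1)), (s, q k))) (t k)
        = fderiv ℝ Ld ((t (k - 1), q (k - 1)), (t k, q k)) ((0, 0), (1, 0)) :=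
      (extDisc_hasDerivAt_slot3 Ld hdiff _ _ _ _).deriv
    have hD1 : deriv (fun s => Ld ((s, q k), (t (k + 1), q (k + 1)))) (t k)
        = fderiv ℝ Ld ((t k, q k), (t (k + 1), q (k + 1))) ((1, 0), (0, 0)) :=
      (extDisc_hasDerivAt_slot1 Ld hdiff _ _ _ _).deriv
    constructor
    · rintro ⟨hG, hD⟩ ⟨s, w⟩
      have e1 : ((0 : ℝ × EuclideanSpace ℝ (Fin d)), ((s : ℝ), w))
          = s • ((((0:ℝ), (0:EuclideanSpace ℝ (Fin d))), ((1:ℝ), (0:EuclideanSpace ℝ (Fin d)))))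
            + (((0:ℝ), (0:EuclideanSpace ℝ (Fin d))), ((0:ℝ), w)) := by
        simp [Prod.ext_iff]
      have e2 : (((s : ℝ), w), (0 : ℝ × EuclideanSpace ℝ (Fin d)))
          = s • ((((1:ℝ), (0:EuclideanSpace ℝ (Fin d))), ((0:ℝ), (0:EuclideanSpace ℝ (Fin d)))))
            + (((0:ℝ), w), ((0:ℝ), (0:EuclideanSpace ℝ (Fin d)))) := by
        simp [Prod.ext_iff]
      rw [e1, e2, map_add, map_add, map_smul, map_smul]
      have h1 : fderiv ℝ Ld ((t (k - 1), q (k - 1)), (t k, q k)) ((0, 0), (1, 0))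
          + fderiv ℝ Ld ((t k, q k), (t (k + 1), q (k + 1))) ((1, 0), (0, 0)) = 0 := by
        rw [← hD3, ← hD1]; exact hD
      have h2 : fderiv ℝ Ld ((t (k - 1), q (k - 1)), (t k, q k)) ((0, 0), (0, w))
          + fderiv ℝ Ld ((t k, q k), (t (k + 1), q (k + 1))) ((0, w), (0, 0)) = 0 := by
        rw [← hG4 w, ← hG2 w, ← inner_add_left, hG, inner_zero_left]
      have h1' : s * fderiv ℝ Ld ((t (k - 1), q (k - 1)), (t k, q k)) ((0, 0), (1, 0))
          + s * fderiv ℝ Ld ((t k, q k), (t (k + 1), q (k + 1))) ((1, 0), (0, 0)) = 0 := by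
        rw [← mul_add, h1, mul_zero]
      simp only [smul_eq_mul]
      linarith [h1', h2]
    · intro h
      refine ⟨?_, ?_⟩
      · have hz : ∀ w, ⟪gradient (fun y => Ld ((t (k - 1), q (k - 1)), (t k, y))) (q k)
            + gradient (fun x => Ld ((t k, x), (t (k + 1), q (k + 1)))) (q k), w⟫ = 0 := by
          intro w
          rw [inner_add_left, hG4 w, hG2 w]
          exact h (0, w)
        exact inner_self_eq_zero.mp (hz _)
      · rw [hD3, hD1]
        exact h (1, 0)
  constructor
  · -- stationarity implies Euler–Lagrange
    intro hstat k hk1 hk2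
    rw [hEL k hk1 hk2]
    rintro ⟨s, w⟩
    have hk0 : ¬ (0 = k) := by omega
    have hkN : ¬ (N = k) := by omega
    have hst := hstat (fun j => if j = k then s else 0) (fun j => if j = k then w else 0)
      (by simp [hk0]) (by simp [hkN]) (by simp [hk0]) (by simp [hkN])
    rw [extDisc_deriv_action Ld hdiff N t _ q _] at hst
    have hre := extDisc_sum_rearrange
      (fun j => fderiv ℝ Ld ((t j, q j), (t (j + 1), q (j + 1)))) N
      (fun j => ((if j = k then s else 0 : ℝ), (if j = k then w else 0 : EuclideanSpace ℝ (Fin d))))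
      (by simp [hk0]) (by simp [hkN])
    rw [hre] at hst
    have hsum : ∑ j ∈ Finset.range N,
        (fderiv ℝ Ld ((t j, q j), (t (j + 1), q (j + 1)))
            (((if j = k then s else 0 : ℝ), (if j = k then w else 0 : EuclideanSpace ℝ (Fin d))), 0)
          + fderiv ℝ Ld ((t (j - 1), q (j - 1)), (t (j - 1 + 1), q (j - 1 + 1)))
            (0, ((if j = k then s else 0 : ℝ), (if j = k then w else 0 : EuclideanSpace ℝ (Fin d)))))
        = fderiv ℝ Ld ((t k, q k), (t (k + 1), q (k + 1))) ((s, w), 0)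
          + fderiv ℝ Ld ((t (k - 1), q (k - 1)), (t (k - 1 + 1), q (k - 1 + 1))) (0, (s, w)) := by
      rw [Finset.sum_eq_single_of_mem k (Finset.mem_range.mpr (by omega))]
      · simp
      · intro j _ hjk
        simp [hjk, Prod.mk_zero_zero]
    rw [hsum] at hst
    have hkk : k - 1 + 1 = k := by omega
    rw [hkk] at hst
    linarith [hst]
  · -- Euler–Lagrange implies stationarity
    intro hel τ v h0 hN' hv0 hvN
    rw [extDisc_deriv_action Ld hdiff N t τ q v]
    have hre := extDisc_sum_rearrange
      (fun j => fderiv ℝ Ld ((t j, q j), (t (j + 1), q (j + 1)))) N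
      (fun j => ((τ j, v j) : ℝ × EuclideanSpace ℝ (Fin d)))
      (by simp [h0, hv0, Prod.mk_zero_zero]) (by simp [hN', hvN, Prod.mk_zero_zero])
    rw [hre]
    apply Finset.sum_eq_zero
    intro j hj
    rcases Nat.eq_zero_or_pos j with hj0 | hj1
    · subst hj0
      simp [h0, hv0, Prod.mk_zero_zero]
    · have hjN : j + 1 ≤ N := Finset.mem_range.mp hj
      have hq := (hEL j hj1 hjN).mp (hel j hj1 hjN) (τ j, v j)
      have hkk : j - 1 + 1 = j := by omega
      rw [hkk]
      linarith [hq]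
end
end

section
/- Let d ≥ 1, N ≥ 1, let L_d : (ℝ × ℝ^d) × (ℝ × ℝ^d) → ℝ, written L_d(t, q, t', q'), be continuously differentiable, let f_d⁺, f_d⁻ : (ℝ × ℝ^d) × (ℝ × ℝ^d) → ℝ^d be the discrete forces, let g_d⁺, g_d⁻ : (ℝ × ℝ^d) × (ℝ × ℝ^d) → ℝ be the discrete power terms, and let (t, q) : {0, 1, …, N} → ℝ × ℝ^d be an extended discrete path. Then the following are equivalent: (a) for every pair τ : {0, …, N} → ℝ and v : {0, …, N} → ℝ^d with τ₀ = τ_N = 0 and v₀ = v_N = 0, the derivative at ε = 0 of ε ↦ Σ_{k=0}^{N−1} L_d(t_k + ε·τ_k, q_k + ε·v_k, t_{k+1} + ε·τ_{k+1}, q_{k+1} + ε·v_{k+1}), plus Σ_{k=0}^{N−1} [⟨f_d⁺(t_k, q_k, t_{k+1}, q_{k+1}), v_{k+1}⟩ + ⟨f_d⁻(t_k, q_k, t_{k+1}, q_{k+1}), v_k⟩] + Σ_{k=0}^{N−1} [g_d⁺(t_k, q_k, t_{k+1}, q_{k+1})·τ_{k+1} + g_d⁻(t_k, q_k, t_{k+1},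 q_{k+1})·τ_k], equals 0; (b) for every k with 1 ≤ k ≤ N−1, both extended forced discrete Euler–Lagrange equations hold: D₄L_d(t_{k−1}, q_{k−1}, t_k, q_k) + D₂L_d(t_k, q_k, t_{k+1}, q_{k+1}) + f_d⁺(t_{k−1}, q_{k−1}, t_k, q_k) + f_d⁻(t_k, q_k, t_{k+1}, q_{k+1}) = 0 and D₃L_d(t_{k−1}, q_{k−1}, t_k, q_k) + D₁L_d(t_k, q_k, t_{k+1}, q_{k+1}) + g_d⁺(t_{k−1}, q_{k−1}, t_k, q_k) + g_d⁻(t_k, q_k, t_{k+1}, q_{k+1}) = 0. -/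
open scoped RealInnerProductSpace

section aux

variable {d : ℕ}
  {Ld : (ℝ × EuclideanSpace ℝ (Fin d)) × (ℝ × EuclideanSpace ℝ (Fin d)) → ℝ}

private lemma LDA.step_hasDerivAt (hLd : Differentiable ℝ Ld)
    (t1 t2 τ1 τ2 : ℝ) (q1 q2 v1 v2 : EuclideanSpace ℝ (Fin d)) :
    HasDerivAt (fun ε : ℝ => Ld ((t1 + ε * τ1, q1 + ε • v1), (t2 + ε * τ2, q2 + ε • v2)))
      (fderiv ℝ Ld ((t1, q1), (t2, q2)) ((τ1, v1), (τ2, v2))) 0 := by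
  have h1 : HasDerivAt (fun ε : ℝ => t1 + ε * τ1) τ1 0 :=
    (hasDerivAt_mul_const τ1).const_add t1
  have h2 : HasDerivAt (fun ε : ℝ => q1 + ε • v1) v1 0 := by
    simpa using ((hasDerivAt_id (0 : ℝ)).smul_const v1).const_add q1
  have h3 : HasDerivAt (fun ε : ℝ => t2 + ε * τ2) τ2 0 :=
    (hasDerivAt_mul_const τ2).const_add t2
  have h4 : HasDerivAt (fun ε : ℝ => q2 + ε • v2) v2 0 := by
    simpa using ((hasDerivAt_id (0 : ℝ)).smul_const v2).const_add q2
  have hp : HasDerivAt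
      (fun ε : ℝ => ((t1 + ε * τ1, q1 + ε • v1), (t2 + ε * τ2, q2 + ε • v2)))
      ((τ1, v1), (τ2, v2)) 0 := HasDerivAt.prodMk (HasDerivAt.prodMk h1 h2) (HasDerivAt.prodMk h3 h4)
  have := ((hLd _).hasFDerivAt).comp_hasDerivAt 0 hp
  simpa [Function.comp_def] using this

private lemma LDA.inner_grad_right (hLd : Differentiable ℝ Ld)
    (p1 : ℝ × EuclideanSpace ℝ (Fin d)) (s : ℝ) (y w : EuclideanSpace ℝ (Fin d)) :
    ⟪gradient (fun y' => Ld (p1, (s, y'))) y, w⟫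
      = fderiv ℝ Ld (p1, (s, y)) ((0, 0), (0, w)) := by
  have hι : HasFDerivAt (fun y' : EuclideanSpace ℝ (Fin d) => (p1, (s, y')))
      ((0 : EuclideanSpace ℝ (Fin d) →L[ℝ] ℝ × EuclideanSpace ℝ (Fin d)).prod
        ((0 : EuclideanSpace ℝ (Fin d) →L[ℝ] ℝ).prod
          (ContinuousLinearMap.id ℝ (EuclideanSpace ℝ (Fin d))))) y :=
    HasFDerivAt.prodMk (hasFDerivAt_const p1 y) (HasFDerivAt.prodMk (hasFDerivAt_const s y) (hasFDerivAt_id y))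
  have hc : HasFDerivAt (fun y' => Ld (p1, (s, y')))
      ((fderiv ℝ Ld (p1, (s, y))).comp _) y := ((hLd _).hasFDerivAt).comp y hι
  rw [hc.hasGradientAt.gradient, InnerProductSpace.toDual_symm_apply]
  rfl

private lemma LDA.inner_grad_left (hLd : Differentiable ℝ Ld)
    (p2 : ℝ × EuclideanSpace ℝ (Fin d)) (s : ℝ) (y w : EuclideanSpace ℝ (Fin d)) :
    ⟪gradient (fun y' => Ld ((s, y'), p2)) y, w⟫
      = fderiv ℝ Ld ((s, y), p2) ((0, w), (0, 0)) := by
  have hι : HasFDerivAt (fun y' : EuclideanSpace ℝ (Fin d) => ((s, y'), p2))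
      (((0 : EuclideanSpace ℝ (Fin d) →L[ℝ] ℝ).prod
          (ContinuousLinearMap.id ℝ (EuclideanSpace ℝ (Fin d)))).prod
        (0 : EuclideanSpace ℝ (Fin d) →L[ℝ] ℝ × EuclideanSpace ℝ (Fin d))) y :=
    HasFDerivAt.prodMk (HasFDerivAt.prodMk (hasFDerivAt_const s y) (hasFDerivAt_id y)) (hasFDerivAt_const p2 y)
  have hc : HasFDerivAt (fun y' => Ld ((s, y'), p2))
      ((fderiv ℝ Ld ((s, y), p2)).comp _) y := ((hLd _).hasFDerivAt).comp y hι
  rw [hc.hasGradientAt.gradient, InnerProductSpace.toDual_symm_apply]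
  rfl

private lemma LDA.deriv_right (hLd : Differentiable ℝ Ld)
    (p1 : ℝ × EuclideanSpace ℝ (Fin d)) (s : ℝ) (y : EuclideanSpace ℝ (Fin d)) :
    deriv (fun s' => Ld (p1, (s', y))) s
      = fderiv ℝ Ld (p1, (s, y)) ((0, 0), (1, 0)) := by
  have hp : HasDerivAt (fun s' : ℝ => (p1, (s', y)))
      (((0 : ℝ × EuclideanSpace ℝ (Fin d)), ((1 : ℝ), (0 : EuclideanSpace ℝ (Fin d))))) s :=
    HasDerivAt.prodMk (hasDerivAt_const s p1) (HasDerivAt.prodMk (hasDerivAt_id s) (hasDerivAt_const s y))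
  have := ((hLd _).hasFDerivAt).comp_hasDerivAt s hp
  simpa [Function.comp_def, Prod.mk_zero_zero] using this.deriv

private lemma LDA.deriv_left (hLd : Differentiable ℝ Ld)
    (p2 : ℝ × EuclideanSpace ℝ (Fin d)) (s : ℝ) (y : EuclideanSpace ℝ (Fin d)) :
    deriv (fun s' => Ld ((s', y), p2)) s
      = fderiv ℝ Ld ((s, y), p2) ((1, 0), (0, 0)) := by
  have hp : HasDerivAt (fun s' : ℝ => ((s', y), p2))
      ((((1 : ℝ), (0 : EuclideanSpace ℝ (Fin d))), (0 : ℝ × EuclideanSpace ℝ (Fin d)))) s :=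
    HasDerivAt.prodMk (HasDerivAt.prodMk (hasDerivAt_id s) (hasDerivAt_const s y)) (hasDerivAt_const s p2)
  have := ((hLd _).hasFDerivAt).comp_hasDerivAt s hp
  simpa [Function.comp_def, Prod.mk_zero_zero] using this.deriv

end aux

/-- **Extended discrete Lagrange–d'Alembert principle is equivalent to the extended forced
discrete Euler–Lagrange equations.**  An extended discrete path `(t, q) : {0, …, N} → ℝ × ℝ^d`
satisfies the extended discrete Lagrange–d'Alembert principle — the variation of the extended
discrete action plus the discrete virtual work of the forces `f_d±` (from configuration
variations) and the discrete power terms `g_d±` (from time variations) vanishes for all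
variations `(τ, v)` vanishing at the endpoints — if and only if both extended forced discrete
Euler–Lagrange equations hold for `1 ≤ k ≤ N−1`:
`D₄L_d(t_{k−1}, q_{k−1}, t_k, q_k) + D₂L_d(t_k, q_k, t_{k+1}, q_{k+1})
  + f_d⁺(t_{k−1}, q_{k−1}, t_k, q_k) + f_d⁻(t_k, q_k, t_{k+1}, q_{k+1}) = 0` and
`D₃L_d(t_{k−1}, q_{k−1}, t_k, q_k) + D₁L_d(t_k, q_k, t_{k+1}, q_{k+1})
  + g_d⁺(t_{k−1}, q_{k−1}, t_k, q_k) + g_d⁻(t_k, q_k, t_{k+1}, q_{k+1}) = 0`. -/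
theorem extended_discrete_lagrange_dalembert_iff_extended_forced_discrete_euler_lagrange
    (d : ℕ) (hd : 1 ≤ d) (N : ℕ) (hN : 1 ≤ N)
    (Ld : (ℝ × EuclideanSpace ℝ (Fin d)) × (ℝ × EuclideanSpace ℝ (Fin d)) → ℝ)
    (hLd : ContDiff ℝ 1 Ld)
    (fdp fdm : (ℝ × EuclideanSpace ℝ (Fin d)) × (ℝ × EuclideanSpace ℝ (Fin d)) →
      EuclideanSpace ℝ (Fin d))
    (gdp gdm : (ℝ × EuclideanSpace ℝ (Fin d)) × (ℝ × EuclideanSpace ℝ (Fin d)) → ℝ)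
    (t : ℕ → ℝ) (q : ℕ → EuclideanSpace ℝ (Fin d)) :
    (∀ (τ : ℕ → ℝ) (v : ℕ → EuclideanSpace ℝ (Fin d)),
      τ 0 = 0 → τ N = 0 → v 0 = 0 → v N = 0 →
      deriv (fun ε : ℝ =>
          ∑ k ∈ Finset.range N,
            Ld ((t k + ε * τ k, q k + ε • v k),
                (t (k + 1) + ε * τ (k + 1), q (k + 1) + ε • v (k + 1)))) 0
        + ∑ k ∈ Finset.range N,
            (⟪fdp ((t k, q k), (t (k + 1), q (k + 1))), v (k + 1)⟫
              + ⟪fdm ((t k, q k), (t (k + 1), q (k + 1))), v k⟫)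
        + ∑ k ∈ Finset.range N,
            (gdp ((t k, q k), (t (k + 1), q (k + 1))) * τ (k + 1)
              + gdm ((t k, q k), (t (k + 1), q (k + 1))) * τ k) = 0)
    ↔
    (∀ k : ℕ, 1 ≤ k → k + 1 ≤ N →
      gradient (fun y => Ld ((t (k - 1), q (k - 1)), (t k, y))) (q k)
        + gradient (fun x => Ld ((t k, x), (t (k + 1), q (k + 1)))) (q k)
        + fdp ((t (k - 1), q (k - 1)), (t k, q k))
        + fdm ((t k, q k), (t (k + 1), q (k + 1))) = 0
      ∧
      deriv (fun s => Ld ((t (k - 1), q (k - 1)), (s, q k))) (t k)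
        + deriv (fun s => Ld ((s, q k), (t (k + 1), q (k + 1)))) (t k)
        + gdp ((t (k - 1), q (k - 1)), (t k, q k))
        + gdm ((t k, q k), (t (k + 1), q (k + 1))) = 0) := by
  have hdiff : Differentiable ℝ Ld := hLd.differentiable one_ne_zero
  have hder : ∀ (τ : ℕ → ℝ) (v : ℕ → EuclideanSpace ℝ (Fin d)),
      HasDerivAt (fun ε : ℝ =>
          ∑ k ∈ Finset.range N,
            Ld ((t k + ε * τ k, q k + ε • v k),
                (t (k + 1) + ε * τ (k + 1), q (k + 1) + ε • v (k + 1))))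
        (∑ k ∈ Finset.range N,
          fderiv ℝ Ld ((t k, q k), (t (k + 1), q (k + 1)))
            ((τ k, v k), (τ (k + 1), v (k + 1)))) 0 := fun τ v =>
    HasDerivAt.fun_sum fun k _ => LDA.step_hasDerivAt hdiff _ _ _ _ _ _ _ _
  have main : ∀ (τ : ℕ → ℝ) (v : ℕ → EuclideanSpace ℝ (Fin d)),
      τ 0 = 0 → τ N = 0 → v 0 = 0 → v N = 0 →
      deriv (fun ε : ℝ =>
          ∑ k ∈ Finset.range N,
            Ld ((t k + ε * τ k, q k + ε • v k),
                (t (k + 1) + ε * τ (k + 1), q (k + 1) + ε • v (k + 1)))) 0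
        + ∑ k ∈ Finset.range N,
            (⟪fdp ((t k, q k), (t (k + 1), q (k + 1))), v (k + 1)⟫
              + ⟪fdm ((t k, q k), (t (k + 1), q (k + 1))), v k⟫)
        + ∑ k ∈ Finset.range N,
            (gdp ((t k, q k), (t (k + 1), q (k + 1))) * τ (k + 1)
              + gdm ((t k, q k), (t (k + 1), q (k + 1))) * τ k)
      = ∑ j ∈ Finset.range (N - 1),
          (⟪gradient (fun y => Ld ((t j, q j), (t (j + 1), y))) (q (j + 1))
              + gradient (fun x => Ld ((t (j + 1), x), (t (j + 1 + 1), q (j + 1 + 1)))) (q (j + 1))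
              + fdp ((t j, q j), (t (j + 1), q (j + 1)))
              + fdm ((t (j + 1), q (j + 1)), (t (j + 1 + 1), q (j + 1 + 1))), v (j + 1)⟫
            + (deriv (fun s => Ld ((t j, q j), (s, q (j + 1)))) (t (j + 1))
                + deriv (fun s => Ld ((s, q (j + 1)), (t (j + 1 + 1), q (j + 1 + 1)))) (t (j + 1))
                + gdp ((t j, q j), (t (j + 1), q (j + 1)))
                + gdm ((t (j + 1), q (j + 1)), (t (j + 1 + 1), q (j + 1 + 1)))) * τ (j + 1)) := by
    intro τ v h0 hτN hv0 hvN
    obtain ⟨M, rfl⟩ : ∃ M, N = M + 1 := ⟨N - 1, by omega⟩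
    rw [(hder τ v).deriv, ← Finset.sum_add_distrib, ← Finset.sum_add_distrib]
    simp only [Nat.add_sub_cancel]
    calc
      ∑ j ∈ Finset.range (M + 1),
          (fderiv ℝ Ld ((t j, q j), (t (j + 1), q (j + 1))) ((τ j, v j), (τ (j + 1), v (j + 1)))
            + (⟪fdp ((t j, q j), (t (j + 1), q (j + 1))), v (j + 1)⟫
                + ⟪fdm ((t j, q j), (t (j + 1), q (j + 1))), v j⟫)
            + (gdp ((t j, q j), (t (j + 1), q (j + 1))) * τ (j + 1)
                + gdm ((t j, q j), (t (j + 1), q (j + 1))) * τ j))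
        = ∑ j ∈ Finset.range (M + 1),
            ((fderiv ℝ Ld ((t j, q j), (t (j + 1), q (j + 1))) ((τ j, v j), (0, 0))
                + ⟪fdm ((t j, q j), (t (j + 1), q (j + 1))), v j⟫
                + gdm ((t j, q j), (t (j + 1), q (j + 1))) * τ j)
              + (fderiv ℝ Ld ((t j, q j), (t (j + 1), q (j + 1))) ((0, 0), (τ (j + 1), v (j + 1)))
                + ⟪fdp ((t j, q j), (t (j + 1), q (j + 1))), v (j + 1)⟫
                + gdp ((t j, q j), (t (j + 1), q (j + 1))) * τ (j + 1))) := by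
          refine Finset.sum_congr rfl fun j _ => ?_
          have harg : ((τ j, v j), (τ (j + 1), v (j + 1)))
              = (((τ j, v j), ((0 : ℝ), (0 : EuclideanSpace ℝ (Fin d))))
                + (((0 : ℝ), (0 : EuclideanSpace ℝ (Fin d))), (τ (j + 1), v (j + 1)))) := by
            simp
          rw [harg, map_add]; ring
      _ = (∑ j ∈ Finset.range (M + 1),
            (fderiv ℝ Ld ((t j, q j), (t (j + 1), q (j + 1))) ((τ j, v j), (0, 0))
              + ⟪fdm ((t j, q j), (t (j + 1), q (j + 1))), v j⟫
              + gdm ((t j, q j), (t (j + 1), q (j + 1))) * τ j))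
          + ∑ j ∈ Finset.range (M + 1),
            (fderiv ℝ Ld ((t j, q j), (t (j + 1), q (j + 1))) ((0, 0), (τ (j + 1), v (j + 1)))
              + ⟪fdp ((t j, q j), (t (j + 1), q (j + 1))), v (j + 1)⟫
              + gdp ((t j, q j), (t (j + 1), q (j + 1))) * τ (j + 1)) :=
        Finset.sum_add_distrib
      _ = ∑ j ∈ Finset.range M,
            ((fderiv ℝ Ld ((t (j + 1), q (j + 1)), (t (j + 1 + 1), q (j + 1 + 1)))
                ((τ (j + 1), v (j + 1)), (0, 0))
              + ⟪fdm ((t (j + 1), q (j + 1)), (t (j + 1 + 1), q (j + 1 + 1))), v (j + 1)⟫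
              + gdm ((t (j + 1), q (j + 1)), (t (j + 1 + 1), q (j + 1 + 1))) * τ (j + 1))
            + (fderiv ℝ Ld ((t j, q j), (t (j + 1), q (j + 1))) ((0, 0), (τ (j + 1), v (j + 1)))
              + ⟪fdp ((t j, q j), (t (j + 1), q (j + 1))), v (j + 1)⟫
              + gdp ((t j, q j), (t (j + 1), q (j + 1))) * τ (j + 1))) := by
          rw [Finset.sum_range_succ', Finset.sum_range_succ]
          rw [show τ 0 = 0 from h0, show v 0 = 0 from hv0,
            show τ (M + 1) = 0 from hτN, show v (M + 1) = 0 from hvN]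
          simp [Finset.sum_add_distrib, Prod.mk_zero_zero]
      _ = _ := by
          refine Finset.sum_congr rfl fun j _ => ?_
          have e1 : ((τ (j + 1), v (j + 1)), ((0 : ℝ), (0 : EuclideanSpace ℝ (Fin d))))
              = τ (j + 1) • ((((1 : ℝ), (0 : EuclideanSpace ℝ (Fin d))),
                  ((0 : ℝ), (0 : EuclideanSpace ℝ (Fin d)))))
                + ((((0 : ℝ), v (j + 1)), ((0 : ℝ), (0 : EuclideanSpace ℝ (Fin d))))) := by
            simp
          have e2 : (((0 : ℝ), (0 : EuclideanSpace ℝ (Fin d))), (τ (j + 1), v (j + 1)))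
              = τ (j + 1) • ((((0 : ℝ), (0 : EuclideanSpace ℝ (Fin d))),
                  ((1 : ℝ), (0 : EuclideanSpace ℝ (Fin d)))))
                + ((((0 : ℝ), (0 : EuclideanSpace ℝ (Fin d))), ((0 : ℝ), v (j + 1)))) := by
            simp
          rw [e1, e2, map_add, map_add, map_smul, map_smul, smul_eq_mul, smul_eq_mul,
            inner_add_left, inner_add_left, inner_add_left,
            LDA.inner_grad_right hdiff, LDA.inner_grad_left hdiff,
            LDA.deriv_right hdiff, LDA.deriv_left hdiff]
          ring
  constructor
  · intro hA k hk1 hk2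
    have ek : k - 1 + 1 = k := by omega
    constructor
    · have key : ∀ w : EuclideanSpace ℝ (Fin d),
          ⟪gradient (fun y => Ld ((t (k - 1), q (k - 1)), (t k, y))) (q k)
            + gradient (fun x => Ld ((t k, x), (t (k + 1), q (k + 1)))) (q k)
            + fdp ((t (k - 1), q (k - 1)), (t k, q k))
            + fdm ((t k, q k), (t (k + 1), q (k + 1))), w⟫ = 0 := by
        intro w
        have h := hA (fun _ => 0) (fun j => if j = k then w else 0) rfl rfl
          (if_neg (by omega)) (if_neg (by omega))
        have h' := (main (fun _ => 0) (fun j => if j = k then w else 0) rfl rfl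
          (if_neg (by omega)) (if_neg (by omega))).symm.trans h
        rw [Finset.sum_eq_single_of_mem (k - 1) (by simp only [Finset.mem_range]; omega)
          (fun j _ hne => by rw [if_neg (by omega)]; simp)] at h'
        rw [ek, if_pos rfl] at h'
        simpa using h'
      exact inner_self_eq_zero.mp (key _)
    · have h := hA (fun j => if j = k then 1 else 0) (fun _ => 0)
        (if_neg (by omega)) (if_neg (by omega)) rfl rfl
      have h' := (main (fun j => if j = k then 1 else 0) (fun _ => 0)
        (if_neg (by omega)) (if_neg (by omega)) rfl rfl).symm.trans h
      rw [Finset.sum_eq_single_of_mem (k - 1) (by simp only [Finset.mem_range]; omega)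
        (fun j _ hne => by rw [if_neg (by omega)]; simp)] at h'
      rw [ek, if_pos rfl] at h'
      simpa using h'
  · intro hB τ v h0 hτN hv0 hvN
    rw [main τ v h0 hτN hv0 hvN]
    refine Finset.sum_eq_zero fun j hj => ?_
    simp only [Finset.mem_range] at hj
    obtain ⟨h1, h2⟩ := hB (j + 1) (by omega) (by omega)
    simp only [Nat.add_sub_cancel] at h1 h2
    rw [h1, h2]
    simp
end

section
/- Let d ≥ 1, N ≥ 2, and let L_d : (ℝ × ℝ^d) × (ℝ × ℝ^d) → ℝ, written L_d(t, q, t', q'), be differentiable and time-translation invariant, i.e. L_d(t + s, q, t' + s, q') = L_d(t, q, t', q') for all s ∈ ℝ and all arguments. Let (t, q) : {0, 1, …, N} → ℝ × ℝ^d satisfy the extended discrete energy equation D₃L_d(t_{k−1}, q_{k−1}, t_k, q_k) + D₁L_d(t_k, q_k, t_{k+1}, q_{k+1}) = 0 for all 1 ≤ k ≤ N−1. Define the discrete energy E_k := −D₃L_d(t_{k−1}, q_{k−1}, t_k, q_k) for 1 ≤ k ≤ N. Then the discrete energy is exactly conserved: E_{k+1} = E_k for all 1 ≤ k ≤ N−1.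 -/
/-!
Time-translation invariance makes `L_d(t, q, t', q')` a function of `t' - t` alone, so
`D₁L_d = -D₃L_d` everywhere. Hence
`E_{k+1} = -D₃L_d(t_k, …, t_{k+1}, …) = D₁L_d(t_k, …, t_{k+1}, …)`, which the energy equation
identifies with `-D₃L_d(t_{k-1}, …, t_k, …) = E_k`.
-/

theorem deriv_fst_time_add_deriv_snd_time_eq_zero {𝕜 α β F : Type*} [NontriviallyNormedField 𝕜]
    [NormedAddCommGroup F] [NormedSpace 𝕜 F] (L : (𝕜 × α) × (𝕜 × β) → F) (x : α) (x' : β)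
    (hinv : ∀ s t t' : 𝕜, L ((t + s, x), (t' + s, x')) = L ((t, x), (t', x'))) (a b : 𝕜) :
    deriv (fun u => L ((u, x), (b, x'))) a + deriv (fun v => L ((a, x), (v, x'))) b = 0 := by
  set h : 𝕜 → F := fun w => L ((0, x), (w, x'))
  have h_fst : (fun u => L ((u, x), (b, x'))) = fun u => h (b - u) := by
    funext u
    simpa using hinv u 0 (b - u)
  have h_snd : (fun v => L ((a, x), (v, x'))) = fun v => h (v - a) := by
    funext v
    simpa using hinv a 0 (v - a)
  rw [h_fst, h_snd, deriv_comp_const_sub, deriv_comp_sub_const, neg_add_cancel]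

theorem discrete_energy_conserved_of_time_translation_invariance_general
    (d : ℕ) (N : ℕ)
    (Ld : (ℝ × EuclideanSpace ℝ (Fin d)) × (ℝ × EuclideanSpace ℝ (Fin d)) → ℝ)
    (hinv : ∀ (s t t' : ℝ) (x x' : EuclideanSpace ℝ (Fin d)),
      Ld ((t + s, x), (t' + s, x')) = Ld ((t, x), (t', x')))
    (t : ℕ → ℝ) (q : ℕ → EuclideanSpace ℝ (Fin d))
    (henergy : ∀ k : ℕ, 1 ≤ k → k + 1 ≤ N →
      deriv (fun s => Ld ((t (k - 1), q (k - 1)), (s, q k))) (t k)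
        + deriv (fun s => Ld ((s, q k), (t (k + 1), q (k + 1)))) (t k) = 0)
    (E : ℕ → ℝ)
    (hE : ∀ k : ℕ, 1 ≤ k → k ≤ N →
      E k = -deriv (fun s => Ld ((t (k - 1), q (k - 1)), (s, q k))) (t k)) :
    ∀ k : ℕ, 1 ≤ k → k + 1 ≤ N → E (k + 1) = E k := by
  intro k hk hkN
  have hE_succ := hE (k + 1) (by omega) hkN
  rw [Nat.add_sub_cancel] at hE_succ
  have hD₁_eq_neg_D₃ := deriv_fst_time_add_deriv_snd_time_eq_zero Ld (q k) (q (k + 1))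
    (fun s t t' => hinv s t t' (q k) (q (k + 1))) (t k) (t (k + 1))
  rw [hE_succ, hE k hk (by omega)]
  linarith [henergy k hk hkN]

/-- **Exact discrete energy conservation for time-translation invariant extended discrete
Lagrangians.**  If the differentiable extended discrete Lagrangian `L_d(t, q, t', q')` is
time-translation invariant and the extended discrete path `(t, q)` satisfies the extended
discrete energy equation
`D₃L_d(t_{k−1}, q_{k−1}, t_k, q_k) + D₁L_d(t_k, q_k, t_{k+1}, q_{k+1}) = 0` for
`1 ≤ k ≤ N−1`, then the discrete energy `E_k = −D₃L_d(t_{k−1}, q_{k−1}, t_k, q_k)` is exactly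
conserved: `E_{k+1} = E_k` for `1 ≤ k ≤ N−1`. -/
theorem discrete_energy_conserved_of_time_translation_invariance
    (d : ℕ) (hd : 1 ≤ d) (N : ℕ) (hN : 2 ≤ N)
    (Ld : (ℝ × EuclideanSpace ℝ (Fin d)) × (ℝ × EuclideanSpace ℝ (Fin d)) → ℝ)
    (hLd : Differentiable ℝ Ld)
    (hinv : ∀ (s t t' : ℝ) (x x' : EuclideanSpace ℝ (Fin d)),
      Ld ((t + s, x), (t' + s, x')) = Ld ((t, x), (t', x')))
    (t : ℕ → ℝ) (q : ℕ → EuclideanSpace ℝ (Fin d))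
    (henergy : ∀ k : ℕ, 1 ≤ k → k + 1 ≤ N →
      deriv (fun s => Ld ((t (k - 1), q (k - 1)), (s, q k))) (t k)
        + deriv (fun s => Ld ((s, q k), (t (k + 1), q (k + 1)))) (t k) = 0)
    (E : ℕ → ℝ)
    (hE : ∀ k : ℕ, 1 ≤ k → k ≤ N →
      E k = -deriv (fun s => Ld ((t (k - 1), q (k - 1)), (s, q k))) (t k)) :
    ∀ k : ℕ, 1 ≤ k → k + 1 ≤ N → E (k + 1) = E k :=
  discrete_energy_conserved_of_time_translation_invariance_general d N Ld hinv t q henergy E hE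
end

section
/- Let d ≥ 1, N ≥ 2, let L_d : (ℝ × ℝ^d) × (ℝ × ℝ^d) → ℝ, written L_d(t, q, t', q'), be differentiable, and let g_d⁺, g_d⁻ : (ℝ × ℝ^d) × (ℝ × ℝ^d) → ℝ be the discrete power terms. Let (t, q) : {0, 1, …, N} → ℝ × ℝ^d satisfy the extended forced discrete energy equation D₃L_d(t_{k−1}, q_{k−1}, t_k, q_k) + D₁L_d(t_k, q_k, t_{k+1}, q_{k+1}) + g_d⁺(t_{k−1}, q_{k−1}, t_k, q_k) + g_d⁻(t_k, q_k, t_{k+1}, q_{k+1}) = 0 for all 1 ≤ k ≤ N−1. Define the modified discrete energy E_k := −D₃L_d(t_{k−1}, q_{k−1}, t_k, q_k) − g_d⁺(t_{k−1}, q_{k−1}, t_k, q_k) for 1 ≤ k ≤ N. Then for all 1 ≤ k ≤ N−1 the discrete energy balance holds: E_{k+1} − E_k = −[D₁L_d + D₃L_d + g_d⁺ + g_d⁻](t_k, q_k, t_{k+1}, q_{k+1}). -/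
/-- `E_k` is `modifiedDiscreteEnergy D₃L_d g_d⁺ x_{k-1} x_k` with states `x_k = (t_k, q_k)`. -/
def modifiedDiscreteEnergy {X : Type*} (D₃ gp : X → X → ℝ) (x₀ x₁ : X) : ℝ :=
  -D₃ x₀ x₁ - gp x₀ x₁

theorem modifiedDiscreteEnergy_sub_modifiedDiscreteEnergy {X : Type*} (D₁ D₃ gp gm : X → X → ℝ)
    {x₀ x₁ x₂ : X} (henergy : D₃ x₀ x₁ + D₁ x₁ x₂ + gp x₀ x₁ + gm x₁ x₂ = 0) :
    modifiedDiscreteEnergy D₃ gp x₁ x₂ - modifiedDiscreteEnergy D₃ gp x₀ x₁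
      = -(D₁ x₁ x₂ + D₃ x₁ x₂ + gp x₁ x₂ + gm x₁ x₂) := by
  unfold modifiedDiscreteEnergy
  linarith

theorem modified_discrete_energy_balance_general
    (d : ℕ) (N : ℕ)
    (Ld : (ℝ × EuclideanSpace ℝ (Fin d)) × (ℝ × EuclideanSpace ℝ (Fin d)) → ℝ)
    (gdp gdm : (ℝ × EuclideanSpace ℝ (Fin d)) × (ℝ × EuclideanSpace ℝ (Fin d)) → ℝ)
    (t : ℕ → ℝ) (q : ℕ → EuclideanSpace ℝ (Fin d))
    (henergy : ∀ k : ℕ, 1 ≤ k → k + 1 ≤ N →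
      deriv (fun s => Ld ((t (k - 1), q (k - 1)), (s, q k))) (t k)
        + deriv (fun s => Ld ((s, q k), (t (k + 1), q (k + 1)))) (t k)
        + gdp ((t (k - 1), q (k - 1)), (t k, q k))
        + gdm ((t k, q k), (t (k + 1), q (k + 1))) = 0)
    (E : ℕ → ℝ)
    (hE : ∀ k : ℕ, 1 ≤ k → k ≤ N →
      E k = -deriv (fun s => Ld ((t (k - 1), q (k - 1)), (s, q k))) (t k)
            - gdp ((t (k - 1), q (k - 1)), (t k, q k))) :
    ∀ k : ℕ, 1 ≤ k → k + 1 ≤ N →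
      E (k + 1) - E k
        = -(deriv (fun s => Ld ((s, q k), (t (k + 1), q (k + 1)))) (t k)
            + deriv (fun s => Ld ((t k, q k), (s, q (k + 1)))) (t (k + 1))
            + gdp ((t k, q k), (t (k + 1), q (k + 1)))
            + gdm ((t k, q k), (t (k + 1), q (k + 1)))) := by
  intro k hk hkN
  rw [hE (k + 1) (by omega) hkN, hE k hk (by omega), Nat.add_sub_cancel]
  exact modifiedDiscreteEnergy_sub_modifiedDiscreteEnergy
    (fun x y => deriv (fun s => Ld ((s, x.2), y)) x.1)
    (fun x y => deriv (fun s => Ld (x, (s, y.2))) y.1)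
    (fun x y => gdp (x, y)) (fun x y => gdm (x, y))
    (x₀ := (t (k - 1), q (k - 1))) (x₁ := (t k, q k)) (x₂ := (t (k + 1), q (k + 1)))
    (henergy k hk hkN)

/-- **Discrete energy balance for the extended forced discrete energy equation.**
If the extended discrete path `(t, q)` satisfies the extended forced discrete energy equation
`D₃L_d(t_{k−1}, q_{k−1}, t_k, q_k) + D₁L_d(t_k, q_k, t_{k+1}, q_{k+1})
  + g_d⁺(t_{k−1}, q_{k−1}, t_k, q_k) + g_d⁻(t_k, q_k, t_{k+1}, q_{k+1}) = 0` for
`1 ≤ k ≤ N−1`, and the modified discrete energy is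
`E_k = −D₃L_d(t_{k−1}, q_{k−1}, t_k, q_k) − g_d⁺(t_{k−1}, q_{k−1}, t_k, q_k)`, then
`E_{k+1} − E_k = −[D₁L_d + D₃L_d + g_d⁺ + g_d⁻](t_k, q_k, t_{k+1}, q_{k+1})` for
`1 ≤ k ≤ N−1`. -/
theorem modified_discrete_energy_balance
    (d : ℕ) (hd : 1 ≤ d) (N : ℕ) (hN : 2 ≤ N)
    (Ld : (ℝ × EuclideanSpace ℝ (Fin d)) × (ℝ × EuclideanSpace ℝ (Fin d)) → ℝ)
    (hLd : Differentiable ℝ Ld)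
    (gdp gdm : (ℝ × EuclideanSpace ℝ (Fin d)) × (ℝ × EuclideanSpace ℝ (Fin d)) → ℝ)
    (t : ℕ → ℝ) (q : ℕ → EuclideanSpace ℝ (Fin d))
    (henergy : ∀ k : ℕ, 1 ≤ k → k + 1 ≤ N →
      deriv (fun s => Ld ((t (k - 1), q (k - 1)), (s, q k))) (t k)
        + deriv (fun s => Ld ((s, q k), (t (k + 1), q (k + 1)))) (t k)
        + gdp ((t (k - 1), q (k - 1)), (t k, q k))
        + gdm ((t k, q k), (t (k + 1), q (k + 1))) = 0)
    (E : ℕ → ℝ)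
    (hE : ∀ k : ℕ, 1 ≤ k → k ≤ N →
      E k = -deriv (fun s => Ld ((t (k - 1), q (k - 1)), (s, q k))) (t k)
            - gdp ((t (k - 1), q (k - 1)), (t k, q k))) :
    ∀ k : ℕ, 1 ≤ k → k + 1 ≤ N →
      E (k + 1) - E k
        = -(deriv (fun s => Ld ((s, q k), (t (k + 1), q (k + 1)))) (t k)
            + deriv (fun s => Ld ((t k, q k), (s, q (k + 1)))) (t (k + 1))
            + gdp ((t k, q k), (t (k + 1), q (k + 1)))
            + gdm ((t k, q k), (t (k + 1), q (k + 1)))) :=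
  modified_discrete_energy_balance_general d N Ld gdp gdm t q henergy E hE
end
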